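/- For every integer k ≥ 0, set ν = k − n/2 + 1. Then the steady-state density decays exponentially away from the origin: 𝒜_k(z) · e^{z} · z^{1/2 − ν} → (2μ(λB)^k / (k! (4πD)^{n/2})) · (2λ)^{−ν} · √(π/2) as z → ∞. -/

import Mathlib

/-!
The substitution `s = (z / (2λ)) eᵘ` turns the integral defining `𝒜_k(z)` into
`2 (z / (2λ))^ν K_ν(z)`, where `K_ν(z) = ½ ∫ e^{νu - z cosh u} du` is the modified Bessel
function of the second kind. The further substitution `u = 2 arsinh (v / √(2z))` makes
`z cosh u = z + v²`, so that `eᶻ √z K_ν(z) = 2^{-1/2} ∫ g(v / √(2z)) e^{-v²} dv` with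
`g(w) = e^{2ν arsinh w} / √(1 + w²)`. Since `g(0) = 1` and `g` grows at most exponentially,
dominated convergence gives the limit `√π / √2 = √(π/2)`.
-/

open Real MeasureTheory Set Filter Topology

/-- The steady-state generation-`k` density in the normalized distance
`z = |x|√(λ/D)` from the origin:
`𝒜_k(z) = (μ(λB)^k/(k!(4πD)^{n/2})) ∫₀^∞ s^{k−n/2} exp(−λs − z²/(4λs)) ds`. -/
noncomputable def steadyDensity (n : ℕ) (lam D B mu : ℝ) (k : ℕ) (z : ℝ) : ℝ :=
  (mu * (lam * B) ^ k / ((Nat.factorial k : ℝ) * (4 * π * D) ^ ((n : ℝ) / 2))) *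
    ∫ s in Set.Ioi (0:ℝ),
      s ^ ((k : ℝ) - (n : ℝ) / 2) * Real.exp (-lam * s - z ^ 2 / (4 * lam * s))

theorem Real.abs_arsinh_le_abs (x : ℝ) : |arsinh x| ≤ |x| := by
  refine abs_le.2 ⟨?_, ?_⟩
  · calc -|x| = arsinh (sinh (-|x|)) := (arsinh_sinh _).symm
      _ ≤ arsinh x := arsinh_le_arsinh.2 <|
          (sinh_le_self_iff.2 (neg_nonpos.2 (abs_nonneg x))).trans (neg_abs_le x)
  · calc arsinh x ≤ arsinh (sinh |x|) :=
          arsinh_le_arsinh.2 <| (le_abs_self x).trans (self_le_sinh_iff.2 (abs_nonneg x))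
      _ = |x| := arsinh_sinh _

section Substitution

variable {E : Type*} [NormedAddCommGroup E] [NormedSpace ℝ E]

theorem integral_Ioi_eq_integral_mul_exp_smul {c : ℝ} (hc : 0 < c) (f : ℝ → E) :
    ∫ s in Ioi 0, f s = ∫ u, (c * exp u) • f (c * exp u) := by
  have himage : (fun u => c * exp u) '' univ = Ioi 0 := by
    refine Subset.antisymm (image_subset_iff.2 fun u _ => show (0:ℝ) < c * exp u by positivity)
      fun s (hs : 0 < s) => ?_
    exact ⟨log (s / c), trivial, by simp only; rw [exp_log (by positivity)]; field_simp⟩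
  have hderiv : ∀ u ∈ univ, HasDerivWithinAt (fun u => c * exp u) (c * exp u) univ u :=
    fun u _ => ((hasDerivAt_exp u).const_mul c).hasDerivWithinAt
  have hinj : InjOn (fun u => c * exp u) univ := fun a _ b _ h =>
    exp_injective (mul_left_cancel₀ hc.ne' h)
  rw [← himage, integral_image_eq_integral_abs_deriv_smul MeasurableSet.univ hderiv hinj f,
    Measure.restrict_univ]
  simp_rw [abs_of_pos (mul_pos hc (exp_pos _))]

theorem integral_eq_integral_two_arsinh_smul (f : ℝ → E) :
    ∫ u, f u = ∫ w, (2 / √(1 + w ^ 2)) • f (2 * arsinh w) := by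
  have himage : (fun w => 2 * arsinh w) '' univ = univ :=
    image_univ_of_surjective fun u => ⟨sinh (u / 2), by rw [arsinh_sinh]; ring⟩
  have hderiv : ∀ w ∈ univ,
      HasDerivWithinAt (fun w => 2 * arsinh w) (2 / √(1 + w ^ 2)) univ w :=
    fun w _ => ((hasDerivAt_arsinh w).const_mul 2).hasDerivWithinAt.congr_deriv (by ring)
  have hinj : InjOn (fun w => 2 * arsinh w) univ := fun a _ b _ h =>
    arsinh_injective (by simpa using h)
  have := integral_image_eq_integral_abs_deriv_smul MeasurableSet.univ hderiv hinj f
  rw [himage, Measure.restrict_univ] at this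
  rw [this]
  simp_rw [abs_of_pos (div_pos two_pos (sqrt_pos.2 (by positivity : (0:ℝ) < 1 + _ ^ 2)))]

end Substitution

theorem tendsto_integral_comp_div_mul_exp_neg_sq {g : ℝ → ℝ} (hg : Continuous g) {C a : ℝ}
    (hbound : ∀ w, |g w| ≤ C * exp (a * |w|)) :
    Tendsto (fun t => ∫ v, g (v / t) * exp (-v ^ 2)) atTop (𝓝 (g 0 * √π)) := by
  have hgauss : ∫ v, g 0 * exp (-v ^ 2) = g 0 * √π := by
    rw [integral_const_mul]; simpa using congrArg (g 0 * ·) (integral_gaussian 1)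
  rw [← hgauss]
  have hC : 0 ≤ C := by simpa using (abs_nonneg _).trans (hbound 0)
  refine tendsto_integral_filter_of_dominated_convergence
    (fun v => C * exp (a ^ 2 / 2) * exp (-(1 / 2) * v ^ 2)) ?_ ?_ ?_ ?_
  · exact Eventually.of_forall fun t =>
      ((hg.comp (continuous_id.div_const t)).mul (by fun_prop)).aestronglyMeasurable
  · filter_upwards [eventually_ge_atTop 1] with t ht
    refine Eventually.of_forall fun v => ?_
    have hvt : |v / t| ≤ |v| := by
      rw [abs_div, abs_of_pos (show 0 < t by linarith)]; exact div_le_self (abs_nonneg v) ht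
    -- `a |v / t| ≤ |a| |v| ≤ a² / 2 + v² / 2`: half of the Gaussian absorbs the growth of `g`
    have hexp : a * |v / t| - v ^ 2 ≤ a ^ 2 / 2 + -(1 / 2) * v ^ 2 := by
      have := (mul_le_mul_of_nonneg_right (le_abs_self a) (abs_nonneg (v / t))).trans
        (mul_le_mul_of_nonneg_left hvt (abs_nonneg a))
      nlinarith [sq_nonneg (|a| - |v|), sq_abs a, sq_abs v]
    calc ‖g (v / t) * exp (-v ^ 2)‖ = |g (v / t)| * exp (-v ^ 2) := by
          rw [Real.norm_eq_abs, abs_mul, abs_of_pos (exp_pos _)]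
      _ ≤ C * exp (a * |v / t|) * exp (-v ^ 2) := by gcongr; exact hbound _
      _ = C * exp (a * |v / t| - v ^ 2) := by rw [mul_assoc, ← exp_add]; ring_nf
      _ ≤ C * exp (a ^ 2 / 2 + -(1 / 2) * v ^ 2) := by gcongr
      _ = C * exp (a ^ 2 / 2) * exp (-(1 / 2) * v ^ 2) := by rw [exp_add]; ring
  · exact (integrable_exp_neg_mul_sq (by norm_num)).const_mul _
  · refine Eventually.of_forall fun v => ?_
    have hvt : Tendsto (fun t : ℝ => v / t) atTop (𝓝 0) :=
      tendsto_const_nhds.div_atTop tendsto_id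
    exact ((hg.tendsto 0).comp hvt).mul_const _

-- DLMF 10.32.9, `K_ν(z) = ∫₀^∞ e^{-z cosh u} cosh (νu) du`, written over the whole line.
noncomputable def besselK (ν z : ℝ) : ℝ := (∫ u, exp (ν * u - z * cosh u)) / 2

theorem integral_Ioi_rpow_mul_exp_eq_besselK {lam z : ℝ} (hlam : 0 < lam) (hz : 0 < z)
    (ν : ℝ) :
    ∫ s in Ioi 0, s ^ (ν - 1) * exp (-lam * s - z ^ 2 / (4 * lam * s)) =
      2 * (z / (2 * lam)) ^ ν * besselK ν z := by
  set c := z / (2 * lam)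
  have hc : 0 < c := by positivity
  rw [integral_Ioi_eq_integral_mul_exp_smul hc, besselK, mul_div_assoc', mul_div_right_comm,
    mul_div_cancel_left₀ _ two_ne_zero, ← integral_const_mul]
  congr 1 with u
  have hcu : 0 < c * exp u := by positivity
  have hpow : c * exp u * (c * exp u) ^ (ν - 1) = c ^ ν * exp (ν * u) := by
    rw [mul_comm, ← rpow_add_one hcu.ne', sub_add_cancel, mul_rpow hc.le (exp_pos u).le,
      ← exp_mul, mul_comm u]
  have hexp : -lam * (c * exp u) - z ^ 2 / (4 * lam * (c * exp u)) = -(z * cosh u) := by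
    rw [cosh_eq, exp_neg]
    simp only [c]
    field_simp
    ring
  rw [smul_eq_mul, ← mul_assoc, hpow, hexp, mul_assoc, ← exp_add, sub_eq_add_neg]

theorem besselK_eq_integral_gaussian {z : ℝ} (hz : 0 < z) (ν : ℝ) :
    besselK ν z = exp (-z) / √(2 * z) *
      ∫ v, exp (2 * ν * arsinh (v / √(2 * z))) / √(1 + (v / √(2 * z)) ^ 2) *
        exp (-v ^ 2) := by
  set b := √(2 * z)
  have hb : 0 < b := sqrt_pos.2 (by positivity)
  have hb2 : b ^ 2 = 2 * z := sq_sqrt (by positivity)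
  have hscale : ∫ v, exp (2 * ν * arsinh (v / b)) / √(1 + (v / b) ^ 2) * exp (-v ^ 2) =
      b * ∫ w, exp (2 * ν * arsinh w) / √(1 + w ^ 2) * exp (-(2 * z) * w ^ 2) := by
    have := Measure.integral_comp_div
      (fun w => exp (2 * ν * arsinh w) / √(1 + w ^ 2) * exp (-(2 * z) * w ^ 2)) b
    rw [abs_of_pos hb, smul_eq_mul] at this
    rw [← this]
    congr 1 with v
    rw [div_pow, ← hb2]
    field_simp
  have hcosh : ∀ w, cosh (2 * arsinh w) = 1 + 2 * w ^ 2 := fun w => by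
    rw [cosh_two_mul, cosh_sq, sinh_arsinh]; ring
  rw [hscale, besselK, integral_eq_integral_two_arsinh_smul, ← mul_assoc,
    div_mul_cancel₀ _ hb.ne', ← integral_const_mul, ← integral_div]
  congr 1 with w
  rw [smul_eq_mul, hcosh,
    show ν * (2 * arsinh w) - z * (1 + 2 * w ^ 2) = -z + (2 * ν * arsinh w + -(2 * z) * w ^ 2) by
      ring, exp_add, exp_add]
  ring

theorem tendsto_besselK_mul_exp_mul_sqrt (ν : ℝ) :
    Tendsto (fun z => besselK ν z * exp z * √z) atTop (𝓝 √(π / 2)) := by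
  set g : ℝ → ℝ := fun w => exp (2 * ν * arsinh w) / √(1 + w ^ 2)
  have hsqrt_pos : ∀ w : ℝ, 0 < √(1 + w ^ 2) := fun w => sqrt_pos.2 (by positivity)
  have hg : Continuous g :=
    (continuous_const.mul continuous_arsinh).rexp.div (by fun_prop) fun w => (hsqrt_pos w).ne'
  have hbound : ∀ w, |g w| ≤ 1 * exp (|2 * ν| * |w|) := fun w => by
    calc |g w| = g w := abs_of_pos (div_pos (exp_pos _) (hsqrt_pos w))
      _ ≤ exp (2 * ν * arsinh w) :=
          div_le_self (exp_pos _).le (one_le_sqrt.2 (by nlinarith [sq_nonneg w]))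
      _ ≤ exp (|2 * ν| * |w|) := exp_le_exp.2 <|
          calc 2 * ν * arsinh w ≤ |2 * ν * arsinh w| := le_abs_self _
            _ = |2 * ν| * |arsinh w| := abs_mul _ _
            _ ≤ |2 * ν| * |w| := mul_le_mul_of_nonneg_left (abs_arsinh_le_abs w) (abs_nonneg _)
      _ = 1 * exp (|2 * ν| * |w|) := (one_mul _).symm
  have hJ := (tendsto_integral_comp_div_mul_exp_neg_sq hg hbound).comp
    (tendsto_sqrt_atTop.comp (tendsto_id.const_mul_atTop two_pos))
  have hg0 : g 0 = 1 := by simp [g]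
  rw [hg0, one_mul] at hJ
  rw [sqrt_div' π zero_le_two]
  refine (hJ.div_const √2).congr' ?_
  filter_upwards [eventually_gt_atTop 0] with z hz
  have hsz : 0 < √z := sqrt_pos.2 hz
  have hscalar : ∀ J : ℝ, exp (-z) / (√2 * √z) * J * exp z * √z = J / √2 := fun J => by
    rw [exp_neg]
    field_simp
  simp only [Function.comp_apply, id, g]
  rw [besselK_eq_integral_gaussian hz, sqrt_mul zero_le_two, hscalar]

theorem steadyDensity_exponential_decay_general
    (n : ℕ) (lam D B mu : ℝ)
    (hlam : 0 < lam) (k : ℕ) :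
    Filter.Tendsto
      (fun z : ℝ => steadyDensity n lam D B mu k z * Real.exp z *
        z ^ ((1:ℝ) / 2 - ((k : ℝ) - (n : ℝ) / 2 + 1)))
      atTop
      (nhds ((2 * mu * (lam * B) ^ k /
          ((Nat.factorial k : ℝ) * (4 * π * D) ^ ((n : ℝ) / 2))) *
        (2 * lam) ^ (-((k : ℝ) - (n : ℝ) / 2 + 1)) * Real.sqrt (π / 2))) := by
  set ν : ℝ := (k : ℝ) - (n : ℝ) / 2 + 1
  set C := mu * (lam * B) ^ k / ((Nat.factorial k : ℝ) * (4 * π * D) ^ ((n : ℝ) / 2))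
  have hdensity : ∀ z > 0, steadyDensity n lam D B mu k z * exp z * z ^ ((1:ℝ) / 2 - ν) =
      2 * C * (2 * lam) ^ (-ν) * (besselK ν z * exp z * √z) := fun z hz => by
    have hpow : z ^ ν * z ^ ((1:ℝ) / 2 - ν) = √z := by
      rw [← rpow_add hz, add_sub_cancel, sqrt_eq_rpow]
    rw [steadyDensity, show (k : ℝ) - n / 2 = ν - 1 by ring,
      integral_Ioi_rpow_mul_exp_eq_besselK hlam hz, div_rpow hz.le (by positivity),
      rpow_neg (by positivity), ← hpow]
    ring
  have hlim := ((tendsto_besselK_mul_exp_mul_sqrt ν).const_mul (2 * C * (2 * lam) ^ (-ν))).congr'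
    (eventually_gt_atTop 0 |>.mono fun z hz => (hdensity z hz).symm)
  convert hlim using 2
  ring

/-- Exponential decay away from the origin: with `ν = k − n/2 + 1`,
`𝒜_k(z) e^z z^{1/2−ν} → (2μ(λB)^k/(k!(4πD)^{n/2})) (2λ)^{−ν} √(π/2)` as `z → ∞`. -/
theorem steadyDensity_exponential_decay
    (n : ℕ) (hn : 1 ≤ n) (lam D B mu : ℝ)
    (hlam : 0 < lam) (hD : 0 < D) (hB : 0 < B) (hmu : 0 < mu) (k : ℕ) :
    Filter.Tendsto
      (fun z : ℝ => steadyDensity n lam D B mu k z * Real.exp z *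
        z ^ ((1:ℝ) / 2 - ((k : ℝ) - (n : ℝ) / 2 + 1)))
      atTop
      (nhds ((2 * mu * (lam * B) ^ k /
          ((Nat.factorial k : ℝ) * (4 * π * D) ^ ((n : ℝ) / 2))) *
        (2 * lam) ^ (-((k : ℝ) - (n : ℝ) / 2 + 1)) * Real.sqrt (π / 2))) :=
  steadyDensity_exponential_decay_general n lam D B mu hlam k
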